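/- arXiv:1910.07434 — 3 statements merged into one kernel-verified Lean document; each statement's English description precedes it below -/
import Mathlib

section
/- There exist Γ ∈ (0,1/2) and θ > 0 such that √Γ < θ, θ ≤ √(Γ/(1−Γ)), and (1+θ)·2√Γ·√(1−Γ) < Γ + 2√Γ. (Consequently there are parameter values at which the Davis–Kahan bound applied to the harmonic mean is strictly better than that applied to the arithmetic mean, even though the harmonic mean's top eigenvector is asymptotically uninformative while the arithmetic mean's is not.) -/
/-- There exist `Γ ∈ (0,1/2)` and `θ > 0` with `√Γ < θ ≤ √(Γ/(1−Γ))` and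
`(1+θ)·2√Γ·√(1−Γ) < Γ + 2√Γ`: parameter values at which the Davis–Kahan bound applied to
the harmonic mean beats the one applied to the arithmetic mean, even though the harmonic
mean's top eigenvector is asymptotically uninformative while the arithmetic mean's is not. -/
theorem stmt_6 :
    ∃ (Γ θ : ℝ), Γ ∈ Set.Ioo (0 : ℝ) (1 / 2) ∧ 0 < θ ∧
      Real.sqrt Γ < θ ∧ θ ≤ Real.sqrt (Γ / (1 - Γ)) ∧
      (1 + θ) * (2 * Real.sqrt Γ * Real.sqrt (1 - Γ)) < Γ + 2 * Real.sqrt Γ := by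
  refine ⟨49/100, 4/5, ⟨by norm_num, by norm_num⟩, by norm_num, ?_, ?_, ?_⟩
  · have h : Real.sqrt (49/100) = 7/10 := by
      rw [show (49/100 : ℝ) = (7/10)^2 by norm_num, Real.sqrt_sq (by norm_num)]
    rw [h]; norm_num
  · rw [Real.le_sqrt (by norm_num)]
    · norm_num
    · norm_num
  · have h1 : Real.sqrt (49/100) = 7/10 := by
      rw [show (49/100 : ℝ) = (7/10)^2 by norm_num, Real.sqrt_sq (by norm_num)]
    have h2 : Real.sqrt (1 - 49/100) < 3/4 := by
      rw [show ((3:ℝ)/4) = Real.sqrt ((3/4)^2) by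
        rw [Real.sqrt_sq (by norm_num)]]
      exact Real.sqrt_lt_sqrt (by norm_num) (by norm_num)
    rw [h1]
    nlinarith [Real.sqrt_nonneg (1 - (49:ℝ)/100)]
end

section
/- Let Γ ∈ (0,1/2) and set E₊ = 1 + 2√Γ·√(1−Γ) and E₋ = 1 − 2√Γ·√(1−Γ). Then ∫_{E₋}^{E₊} (x−1)² · √((E₊−x)(x−E₋)) / (2πΓx) dx = Γ. -/
/-!
With `x = 1 + t` and `r = 2√Γ√(1-Γ)` the integral is
`(2πΓ)⁻¹ ∫_{-r}^{r} t² √(r² - t²) / (1 + t) dt`. Splitting `t² / (1 + t) = t - 1 + 1 / (1 + t)`,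
the three pieces contribute `0`, `-πr²/2` and `π (1 - √(1 - r²))`, the last through an
antiderivative containing `arcsin ((r² + t) / (r (1 + t)))`.
As `√(1 - r²) = 1 - 2Γ`, the total is `2πΓ²`.
-/

open Real Set intervalIntegral

section Primitive

variable {r s t : ℝ}

theorem hasDerivAt_sqrt_sq_sub_sq (ht : t ^ 2 < r ^ 2) :
    HasDerivAt (fun t => √(r ^ 2 - t ^ 2)) (-t / √(r ^ 2 - t ^ 2)) t := by
  have hq : HasDerivAt (fun t : ℝ => r ^ 2 - t ^ 2) (-(2 * t)) t := by
    simpa using (hasDerivAt_pow 2 t).const_sub (r ^ 2)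
  refine ((hasDerivAt_sqrt (sub_pos.2 ht).ne').comp t hq).congr_deriv ?_
  field_simp

theorem hasDerivAt_arcsin_div (hr : 0 < r) (ht : t ∈ Ioo (-r) r) :
    HasDerivAt (fun t => arcsin (t / r)) (1 / √(r ^ 2 - t ^ 2)) t := by
  have h₁ : t / r ≠ -1 := by rw [Ne, div_eq_iff hr.ne']; linarith [ht.1]
  have h₂ : t / r ≠ 1 := by rw [Ne, div_eq_iff hr.ne']; linarith [ht.2]
  refine ((hasDerivAt_arcsin h₁ h₂).comp t ((hasDerivAt_id t).div_const r)).congr_deriv ?_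
  rw [show 1 - (t / r) ^ 2 = (r ^ 2 - t ^ 2) / r ^ 2 by field_simp, sqrt_div' _ (sq_nonneg r),
    sqrt_sq hr.le]
  field_simp

theorem hasDerivAt_arcsin_moebius (hr : 0 < r) (hs : 0 < s) (hrs : r ^ 2 + s ^ 2 = 1)
    (ht : t ∈ Ioo (-r) r) :
    HasDerivAt (fun t => arcsin ((r ^ 2 + t) / (r * (1 + t))))
      (s / ((1 + t) * √(r ^ 2 - t ^ 2))) t := by
  obtain ⟨htl, htr⟩ := ht
  have h1t : 0 < 1 + t := by nlinarith
  have hq : 0 < r ^ 2 - t ^ 2 := by nlinarith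
  have hcos : 1 - ((r ^ 2 + t) / (r * (1 + t))) ^ 2
      = (s * √(r ^ 2 - t ^ 2) / (r * (1 + t))) ^ 2 := by
    rw [div_pow, div_pow, mul_pow s, sq_sqrt hq.le]
    field_simp
    linear_combination (t ^ 2 - r ^ 2) * hrs
  have hlt : 0 < 1 - ((r ^ 2 + t) / (r * (1 + t))) ^ 2 := by rw [hcos]; positivity
  have h₁ : (r ^ 2 + t) / (r * (1 + t)) ≠ -1 := fun h => by rw [h] at hlt; norm_num at hlt
  have h₂ : (r ^ 2 + t) / (r * (1 + t)) ≠ 1 := fun h => by rw [h] at hlt; norm_num at hlt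
  have hu : HasDerivAt (fun t : ℝ => (r ^ 2 + t) / (r * (1 + t)))
      (r * s ^ 2 / (r * (1 + t)) ^ 2) t := by
    refine (((hasDerivAt_id t).const_add (r ^ 2)).div
      (((hasDerivAt_id t).const_add 1).const_mul r) (by positivity)).congr_deriv ?_
    simp only [id]
    field_simp
    linear_combination -hrs
  refine ((hasDerivAt_arcsin h₁ h₂).comp t hu).congr_deriv ?_
  rw [hcos, sqrt_sq (by positivity)]
  field_simp

/-- Obtained by integrating `t² / (1 + t) = (t - 1) + 1 / (1 + t)` termwise, using that
`√(r² - t²) / (1 + t) = (1 - t) / √(r² - t²) - s² / ((1 + t) √(r² - t²))` when `r² + s² = 1`. -/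
noncomputable def momentPrimitive (r s t : ℝ) : ℝ :=
  -√(r ^ 2 - t ^ 2) ^ 3 / 3 - (t * √(r ^ 2 - t ^ 2) + r ^ 2 * arcsin (t / r)) / 2
    + √(r ^ 2 - t ^ 2) + arcsin (t / r) - s * arcsin ((r ^ 2 + t) / (r * (1 + t)))

theorem hasDerivAt_momentPrimitive (hr : 0 < r) (hs : 0 < s) (hrs : r ^ 2 + s ^ 2 = 1)
    (ht : t ∈ Ioo (-r) r) :
    HasDerivAt (momentPrimitive r s) (t ^ 2 * √(r ^ 2 - t ^ 2) / (1 + t)) t := by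
  have hq : 0 < r ^ 2 - t ^ 2 := by nlinarith [ht.1, ht.2]
  have h1t : 0 < 1 + t := by nlinarith [ht.1, ht.2]
  have hsq : √(r ^ 2 - t ^ 2) ^ 2 = r ^ 2 - t ^ 2 := sq_sqrt hq.le
  have hS := hasDerivAt_sqrt_sq_sub_sq (sub_pos.1 hq)
  have hA := hasDerivAt_arcsin_div hr ht
  have hM := hasDerivAt_arcsin_moebius hr hs hrs ht
  refine (((((hS.pow 3).neg.div_const 3).sub ((((hasDerivAt_id t).mul hS).add
    (hA.const_mul (r ^ 2))).div_const 2)).add hS |>.add hA |>.sub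
      (hM.const_mul s))).congr_deriv ?_
  have : 0 < √(r ^ 2 - t ^ 2) := sqrt_pos.2 hq
  simp only [id]
  field_simp
  linear_combination -6 * hrs + 3 * (t - 1) * hsq

theorem continuousOn_momentPrimitive (hr : 0 < r) (hr1 : r < 1) :
    ContinuousOn (momentPrimitive r s) (Icc (-r) r) := by
  have hden : ∀ t ∈ Icc (-r) r, r * (1 + t) ≠ 0 := fun t ht =>
    mul_ne_zero hr.ne' (by linarith [ht.1])
  unfold momentPrimitive
  fun_prop (disch := assumption)

theorem momentPrimitive_self (hr : 0 < r) :
    momentPrimitive r s r = π / 2 * (1 - s - r ^ 2 / 2) := by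
  have h : (r ^ 2 + r) / (r * (1 + r)) = 1 := by
    rw [div_eq_one_iff_eq (by positivity)]; ring
  simp only [momentPrimitive, sub_self, sqrt_zero, div_self hr.ne', h, arcsin_one]
  ring

theorem momentPrimitive_neg_self (hr : 0 < r) (hr1 : r < 1) :
    momentPrimitive r s (-r) = -(π / 2 * (1 - s - r ^ 2 / 2)) := by
  have h : (r ^ 2 + -r) / (r * (1 + -r)) = -1 := by
    rw [div_eq_iff (mul_ne_zero hr.ne' (by linarith))]; ring
  simp only [momentPrimitive, neg_sq, sub_self, sqrt_zero, neg_div, div_self hr.ne', h,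
    arcsin_neg, arcsin_one]
  ring

end Primitive

theorem integral_sq_mul_sqrt_sq_sub_sq_div_one_add {r : ℝ} (hr : 0 < r) (hr1 : r < 1) :
    ∫ t in -r..r, t ^ 2 * √(r ^ 2 - t ^ 2) / (1 + t) = π * (1 - √(1 - r ^ 2) - r ^ 2 / 2) := by
  set s := √(1 - r ^ 2)
  have hs : 0 < s := sqrt_pos.2 (by nlinarith)
  have hrs : r ^ 2 + s ^ 2 = 1 := by rw [sq_sqrt (by nlinarith)]; ring
  have hden : ∀ t ∈ uIcc (-r) r, 1 + t ≠ 0 := fun t ht => by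
    rw [uIcc_of_le (by linarith)] at ht; linarith [ht.1]
  have hint : IntervalIntegrable (fun t => t ^ 2 * √(r ^ 2 - t ^ 2) / (1 + t)) MeasureTheory.volume
      (-r) r :=
    ContinuousOn.intervalIntegrable (by fun_prop (disch := assumption))
  rw [integral_eq_sub_of_hasDerivAt_of_le (by linarith) (continuousOn_momentPrimitive hr hr1)
    (fun t ht => hasDerivAt_momentPrimitive hr hs hrs ht) hint, momentPrimitive_self hr,
    momentPrimitive_neg_self hr hr1]
  ring

/-- With `E± = 1 ± 2√Γ·√(1−Γ)` for `Γ ∈ (0,1/2)`: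
`∫_{E₋}^{E₊} (x−1)²·√((E₊−x)(x−E₋))/(2πΓx) dx = Γ`. -/
theorem stmt_10 (Γ : ℝ) (hΓ : Γ ∈ Set.Ioo (0 : ℝ) (1 / 2))
    (Em Ep : ℝ)
    (hEm : Em = 1 - 2 * Real.sqrt Γ * Real.sqrt (1 - Γ))
    (hEp : Ep = 1 + 2 * Real.sqrt Γ * Real.sqrt (1 - Γ)) :
    ∫ x in Em..Ep,
      (x - 1) ^ 2 * Real.sqrt ((Ep - x) * (x - Em)) / (2 * Real.pi * Γ * x) = Γ := by
  obtain ⟨hΓ0, hΓ2⟩ := hΓ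
  set r := 2 * √Γ * √(1 - Γ)
  have hr : 0 < r := by
    have := sqrt_pos.2 hΓ0
    have := sqrt_pos.2 (by linarith : 0 < 1 - Γ)
    positivity
  have hr2 : r ^ 2 = 4 * Γ * (1 - Γ) := by
    rw [mul_pow, mul_pow, sq_sqrt hΓ0.le, sq_sqrt (by linarith)]; ring
  have hs : √(1 - r ^ 2) = 1 - 2 * Γ := by
    rw [hr2, show 1 - 4 * Γ * (1 - Γ) = (1 - 2 * Γ) ^ 2 by ring, sqrt_sq (by linarith)]
  have hshift : (fun x => (x - 1) ^ 2 * √((Ep - x) * (x - Em)) / (2 * π * Γ * x))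
      = fun x => (x - 1) ^ 2 * √(r ^ 2 - (x - 1) ^ 2) / (1 + (x - 1)) / (2 * π * Γ) := by
    funext x
    rw [hEm, hEp, show (1 + r - x) * (x - (1 - r)) = r ^ 2 - (x - 1) ^ 2 by ring]
    ring
  rw [hshift, integral_comp_sub_right (fun t => t ^ 2 * √(r ^ 2 - t ^ 2) / (1 + t) / (2 * π * Γ)),
    integral_div, hEm, hEp, show 1 - r - 1 = -r by ring, add_sub_cancel_left,
    integral_sq_mul_sqrt_sq_sub_sq_div_one_add hr (by nlinarith), hs, hr2]
  field_simp
  ring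
end

section
/- Let Γ ∈ (0,1/2) and θ > √(Γ/(1−Γ)). Then (1 − Γ/θ²)/(1 + Γ/θ) − ((θ+1)/θ)·(θ²(1−Γ) − Γ)/(θ²(1−Γ) + θ + Γ) = Γ²(1+θ)² / ( (1 + Γ/θ)·θ·(θ²(1−Γ) + θ + Γ) ), and this quantity is strictly positive. Consequently, the limiting squared eigenvector overlap of the arithmetic mean, (1 − Γ/θ²)/(1 + Γ/θ), strictly exceeds that of the harmonic mean, ((θ+1)/θ)·(θ²(1−Γ) − Γ)/(θ²(1−Γ) + θ + Γ), for all θ above the harmonic-mean phase transition. -/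
/-- For `Γ ∈ (0,1/2)` and `θ > √(Γ/(1−Γ))`, the difference between the limiting squared
eigenvector overlap of the arithmetic mean and that of the harmonic mean equals
`Γ²(1+θ)² / ((1 + Γ/θ)·θ·(θ²(1−Γ) + θ + Γ))`, which is strictly positive. -/
theorem stmt_19 (Γ θ : ℝ) (hΓ : Γ ∈ Set.Ioo (0 : ℝ) (1 / 2))
    (hθ : Real.sqrt (Γ / (1 - Γ)) < θ) :
    (1 - Γ / θ ^ 2) / (1 + Γ / θ) -
        (θ + 1) / θ * ((θ ^ 2 * (1 - Γ) - Γ) / (θ ^ 2 * (1 - Γ) + θ + Γ)) =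
      Γ ^ 2 * (1 + θ) ^ 2 / ((1 + Γ / θ) * θ * (θ ^ 2 * (1 - Γ) + θ + Γ)) ∧
    0 < Γ ^ 2 * (1 + θ) ^ 2 / ((1 + Γ / θ) * θ * (θ ^ 2 * (1 - Γ) + θ + Γ)) := by

  obtain ⟨hΓ0, hΓ2⟩ := hΓ
  have h1Γ : 0 < 1 - Γ := by linarith
  have hθ0 : 0 < θ := lt_of_le_of_lt (Real.sqrt_nonneg _) hθ
  have hd1 : 0 < 1 + Γ / θ := by positivity
  have hd2 : 0 < θ ^ 2 * (1 - Γ) + θ + Γ := by positivity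
  constructor
  · field_simp
    ring
  · positivity
end
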